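/- arXiv:1710.10018 — 4 statements merged into one kernel-verified Lean document; each statement's English description precedes it below -/
import Mathlib

section
/- Let X be a resolving subcategory of finitely generated R-modules. Then the following are equivalent: (i) Ω⁻¹X ⊆ X and every module in X is a first syzygy module; (ii) ΩX = X, i.e. every module of X is a syzygy of a module of X and X is closed under syzygies. -/
open CategoryTheory

noncomputable section

namespace Paper

variable (R : Type) [CommRing R]

/-- finitely generated projective module (object of `add R`) -/
def FGProj (M : ModuleCat.{0} R) : Prop := Module.Finite R M ∧ Module.Projective R M

/-- a short exact sequence `0 → L → M → N → 0` -/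
def SES {L M N : ModuleCat.{0} R} (f : L →ₗ[R] M) (g : M →ₗ[R] N) : Prop :=
  Function.Injective f ∧ Function.Surjective g ∧ LinearMap.ker g = LinearMap.range f

/-- `N` is a first syzygy of `M`: kernel of a surjection from a f.g. projective onto `M`. -/
def IsSyzygy (N M : ModuleCat.{0} R) : Prop :=
  ∃ (P : ModuleCat.{0} R) (f : P →ₗ[R] M), FGProj R P ∧ Function.Surjective f ∧
    Nonempty (N ≃ₗ[R] LinearMap.ker f)

/-- `N` is an `n`-th syzygy of `M` -/
def IsNthSyzygy : ℕ → ModuleCat.{0} R → ModuleCat.{0} R → Prop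
  | 0, N, M => Nonempty (N ≃ₗ[R] M)
  | (n+1), N, M => ∃ K : ModuleCat.{0} R, IsNthSyzygy n K M ∧ IsSyzygy R N K

/-- `f : M → P` is a left `add R`-approximation -/
def IsLeftApprox {M P : ModuleCat.{0} R} (f : M →ₗ[R] P) : Prop :=
  FGProj R P ∧ ∀ (Q : ModuleCat.{0} R), FGProj R Q → ∀ g : M →ₗ[R] Q,
    ∃ h : P →ₗ[R] Q, h.comp f = g

/-- `N` is a first cosyzygy of `M`: cokernel of a left `add R`-approximation. -/
def IsCosyzygy (N M : ModuleCat.{0} R) : Prop :=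
  ∃ (P : ModuleCat.{0} R) (f : M →ₗ[R] P), IsLeftApprox R f ∧
    Nonempty (N ≃ₗ[R] (P ⧸ LinearMap.range f))

/-- `N` is an `n`-th cosyzygy of `M` -/
def IsNthCosyzygy : ℕ → ModuleCat.{0} R → ModuleCat.{0} R → Prop
  | 0, N, M => Nonempty (N ≃ₗ[R] M)
  | (n+1), N, M => ∃ K : ModuleCat.{0} R, IsNthCosyzygy n K M ∧ IsCosyzygy R N K

/-- `T` is an (Auslander) transpose of `M` -/
def IsTranspose (T M : ModuleCat.{0} R) : Prop :=
  ∃ (P₁ P₀ : ModuleCat.{0} R) (d : P₁ →ₗ[R] P₀) (p : P₀ →ₗ[R] M),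
    FGProj R P₁ ∧ FGProj R P₀ ∧ Function.Surjective p ∧
    LinearMap.ker p = LinearMap.range d ∧
    Nonempty (T ≃ₗ[R] ((Module.Dual R P₁) ⧸ LinearMap.range d.dualMap))

/-- stably isomorphic: `M ⊕ P ≅ N ⊕ Q` with `P`, `Q` f.g. projective -/
def StablyIso (M N : ModuleCat.{0} R) : Prop :=
  ∃ P Q : ModuleCat.{0} R, FGProj R P ∧ FGProj R Q ∧
    Nonempty ((M × P) ≃ₗ[R] (N × Q))

/-- resolving subcategory of `mod R` -/
structure Resolving (X : ModuleCat.{0} R → Prop) : Prop where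
  fg : ∀ M, X M → Module.Finite R M
  proj : ∀ M : ModuleCat.{0} R, FGProj R M → X M
  summand : ∀ M N N' : ModuleCat.{0} R, X M → Nonempty (M ≃ₗ[R] N × N') → X N
  extension : ∀ (L M N : ModuleCat.{0} R) (f : L →ₗ[R] M) (g : M →ₗ[R] N),
      SES R f g → X L → X N → X M
  ker_epi : ∀ (L M N : ModuleCat.{0} R) (f : L →ₗ[R] M) (g : M →ₗ[R] N),
      SES R f g → X M → X N → X L

/-- `Ext^i_R(M, N) = 0` -/
def ExtVanish (M N : ModuleCat.{0} R) (i : ℕ) : Prop :=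
  Subsingleton (((Ext R (ModuleCat.{0} R) i).obj (Opposite.op M)).obj N)

/-- totally reflexive (Gorenstein dimension zero) module -/
def TotallyReflexive (M : ModuleCat.{0} R) : Prop :=
  Function.Bijective (Module.Dual.eval R M) ∧
  ∀ i : ℕ, 0 < i → ExtVanish R M (ModuleCat.of R R) i ∧
    ExtVanish R (ModuleCat.of R (Module.Dual R M)) (ModuleCat.of R R) i

/-- `M` has finite projective dimension -/
def FiniteProjDim (M : ModuleCat.{0} R) : Prop :=
  ∃ (n : ℕ) (N : ModuleCat.{0} R), IsNthSyzygy R n N M ∧ FGProj R N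

/-- additive closure of a family of modules -/
def AddClosure (S : ModuleCat.{0} R → Prop) (M : ModuleCat.{0} R) : Prop :=
  ∃ (k : ℕ) (f : Fin k → ModuleCat.{0} R) (N : ModuleCat.{0} R),
    (∀ i, S (f i)) ∧ Nonempty ((M × N) ≃ₗ[R] ((i : Fin k) → f i))

/-- the operation `[−]`: `add` closure of `R` and all syzygies of modules of `Y` -/
def Bracket (Y : ModuleCat.{0} R → Prop) : ModuleCat.{0} R → Prop :=
  AddClosure R (fun N => FGProj R N ∨ ∃ (M : ModuleCat.{0} R) (i : ℕ), Y M ∧ IsNthSyzygy R i N M)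

/-- `Y ∘ Z`: extensions of a module of `Z` by a module of `Y` -/
def ExtOf (Y Z : ModuleCat.{0} R → Prop) (M : ModuleCat.{0} R) : Prop :=
  ∃ (A B : ModuleCat.{0} R) (f : A →ₗ[R] M) (g : M →ₗ[R] B), Y A ∧ Z B ∧ SES R f g

/-- the ball `[C]_n` of radius `n` centered at `C` -/
def Ball (C : ModuleCat.{0} R) : ℕ → ModuleCat.{0} R → Prop
  | 0 => fun _ => False
  | 1 => Bracket R (fun M => Nonempty (M ≃ₗ[R] C))
  | (n+2) => Bracket R (ExtOf R (Ball C (n+1)) (Bracket R (fun M => Nonempty (M ≃ₗ[R] C))))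

/-- `X` has finite radius: `X ⊆ [C]_{n+1}` for some `C ∈ X`. -/
def FiniteRadius (X : ModuleCat.{0} R → Prop) : Prop :=
  ∃ (C : ModuleCat.{0} R) (n : ℕ), X C ∧ ∀ M, X M → Ball R C (n + 1) M

/-- `depth_A M ≥ n`: there is a weakly `M`-regular sequence of length `n` in the maximal ideal -/
def DepthGE (A : Type) [CommRing A] [IsLocalRing A]
    (M : Type) [AddCommGroup M] [Module A M] (n : ℕ) : Prop :=
  ∃ rs : List A, rs.length = n ∧ (∀ x ∈ rs, x ∈ IsLocalRing.maximalIdeal A) ∧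
    RingTheory.Sequence.IsWeaklyRegular M rs

/-- `M` is free at the prime `p` -/
def FreeAt (M : ModuleCat.{0} R) (p : PrimeSpectrum R) : Prop :=
  Module.Free (Localization.AtPrime p.asIdeal) (LocalizedModule p.asIdeal.primeCompl M)

/-- locally free on the punctured spectrum of a local ring -/
def LocFreeOnPunctured [IsLocalRing R] (M : ModuleCat.{0} R) : Prop :=
  ∀ p : PrimeSpectrum R, p.asIdeal ≠ IsLocalRing.maximalIdeal R → FreeAt R M p

/-- a Gorenstein local ring: `R` has finite injective dimension over itself -/
def Gorenstein : Prop :=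
  ∃ n : ℕ, ∀ i : ℕ, n < i → ∀ M : ModuleCat.{0} R, ExtVanish R M (ModuleCat.of R R) i

/-- the annihilator of the `i`-th local cohomology module `H^i_I(M)` -/
def aa (I : Ideal R) (i : ℕ) (M : ModuleCat.{0} R) : Ideal R :=
  Module.annihilator R ((localCohomology I i).obj M)

/-- an Ulrich module over a CM local ring of dimension `d` -/
def Ulrich [IsLocalRing R] (d : ℕ) (U : ModuleCat.{0} R) : Prop :=
  Module.Finite R U ∧ DepthGE R U d ∧ ¬ Subsingleton U ∧
  ∃ xs : List R, xs.length = d ∧ (∀ x ∈ xs, x ∈ IsLocalRing.maximalIdeal R) ∧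
    RingTheory.Sequence.IsWeaklyRegular U xs ∧
    (IsLocalRing.maximalIdeal R) • (⊤ : Submodule R U) = Ideal.ofList xs • ⊤

end Paper

open Paper

section Aux

variable {R : Type} [CommRing R]

/-- trivial equivalence `N ≃ N × PUnit` -/
def auxProdPUnit (N : Type) [AddCommGroup N] [Module R N] : N ≃ₗ[R] N × PUnit where
  toFun n := (n, PUnit.unit)
  invFun p := p.1
  map_add' _ _ := rfl
  map_smul' _ _ := rfl
  left_inv _ := rfl
  right_inv p := by cases p; rfl

lemma aux_iso_mem {X : ModuleCat.{0} R → Prop} (hX : Resolving R X)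
    {M N : ModuleCat.{0} R} (hM : X M) (e : (M : Type) ≃ₗ[R] N) : X N :=
  hX.summand M N (ModuleCat.of R PUnit) hM ⟨e.trans (auxProdPUnit (N : Type))⟩

/-- any finite module over a Noetherian ring admits a left `add R`-approximation
into a finite free module -/
lemma aux_exists_approx [IsNoetherianRing R] (M : ModuleCat.{0} R)
    (hM : Module.Finite R M) :
    ∃ (n : ℕ) (f : (M : Type) →ₗ[R] (Fin n → R)),
      IsLeftApprox R (P := ModuleCat.of R (Fin n → R)) f := by
  haveI := hM
  have : Module.Finite R ((M : Type) →ₗ[R] R) := by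
    have : IsNoetherian R ((M : Type) →ₗ[R] R) := inferInstance
    exact Module.finite_def.mpr (IsNoetherian.noetherian (R := R) (M := (M : Type) →ₗ[R] R) ⊤)
  obtain ⟨n, g, hg⟩ := Module.Finite.exists_fin (R := R) (M := (M : Type) →ₗ[R] R)
  refine ⟨n, LinearMap.pi g, ⟨⟨(inferInstance : Module.Finite R (Fin n → R)), (inferInstance : Module.Projective R (Fin n → R))⟩, ?_⟩⟩
  intro Q hQ φ
  haveI : Module.Finite R Q := hQ.1
  haveI : Module.Projective R Q := hQ.2
  obtain ⟨m, ρ, s, hρ, hs, hρs⟩ := Module.Finite.exists_comp_eq_id_of_projective R (Q : Type)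
  -- each coordinate of s ∘ φ lies in the span of g
  have hcoord : ∀ j : Fin m, ∃ c : Fin n → R,
      (∑ i, c i • g i) = (LinearMap.proj j).comp (s.comp φ) := by
    intro j
    have : (LinearMap.proj j).comp (s.comp φ) ∈
        Submodule.span R (Set.range g) := hg ▸ Submodule.mem_top
    exact Submodule.mem_span_range_iff_exists_fun R |>.mp this
  choose c hc using hcoord
  refine ⟨ρ.comp (LinearMap.pi fun j => ∑ i, c j i • LinearMap.proj i), ?_⟩
  ext x
  have key : (LinearMap.pi fun j => ∑ i, c j i • LinearMap.proj (R := R) (φ := fun _ : Fin n => R) i)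
      ((LinearMap.pi g) x) = s (φ x) := by
    funext j
    have := congrArg (fun ψ : (M : Type) →ₗ[R] R => ψ x) (hc j)
    simpa [LinearMap.pi_apply, LinearMap.sum_apply, LinearMap.smul_apply] using this
  show ρ ((LinearMap.pi fun j => ∑ i, c j i • LinearMap.proj i) ((LinearMap.pi g) x)) = φ x
  rw [key]
  simpa using LinearMap.congr_fun hρs (φ x)

end Aux


/-- for a resolving subcategory `X`, `Ω⁻¹X ⊆ X` together with
`X ⊆ Ω(mod R)` is equivalent to `ΩX = X`. -/
theorem stmt2 (R : Type) [CommRing R] [IsNoetherianRing R]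
    (X : ModuleCat.{0} R → Prop) (hX : Resolving R X) :
    ((∀ M, X M → ∀ N, IsCosyzygy R N M → X N) ∧
     (∀ M, X M → ∃ (P : ModuleCat.{0} R) (f : M →ₗ[R] P),
        FGProj R P ∧ Function.Injective f)) ↔
    ((∀ M, X M → ∀ N, IsSyzygy R N M → X N) ∧
     (∀ M, X M → ∃ N, X N ∧ IsSyzygy R M N)) := by
  constructor
  · rintro ⟨hcos, hemb⟩
    constructor
    · -- X is closed under syzygies (uses only resolvingness)
      rintro M hM N ⟨P, f, hP, hfsurj, ⟨e⟩⟩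
      have hses : SES (L := ModuleCat.of R (LinearMap.ker f)) R (LinearMap.ker f).subtype f :=
        ⟨Submodule.injective_subtype _, hfsurj, (Submodule.range_subtype _).symm⟩
      have hK : X (ModuleCat.of R (LinearMap.ker f)) :=
        hX.ker_epi (ModuleCat.of R (LinearMap.ker f)) P M (LinearMap.ker f).subtype f
          hses (hX.proj P hP) hM
      exact aux_iso_mem hX hK e.symm
    · -- every module of X is a syzygy of its cosyzygy
      intro M hM
      obtain ⟨n, f, happrox⟩ := aux_exists_approx M (hX.fg M hM)
      obtain ⟨P', j, hP', hj⟩ := hemb M hM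
      obtain ⟨h, hh⟩ := happrox.2 P' hP' j
      have hf : Function.Injective f := by
        intro x y hxy
        apply hj
        rw [← LinearMap.congr_fun hh x, ← LinearMap.congr_fun hh y]
        show h (f x) = h (f y)
        exact congrArg (fun t => h t) hxy
      set C : ModuleCat.{0} R := ModuleCat.of R ((Fin n → R) ⧸ LinearMap.range f) with hCdef
      have hC : X C := hcos M hM C
        ⟨ModuleCat.of R (Fin n → R), f, happrox, ⟨LinearEquiv.refl R _⟩⟩
      refine ⟨C, hC, ModuleCat.of R (Fin n → R), (LinearMap.range f).mkQ, happrox.1,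
        Submodule.mkQ_surjective _, ⟨?_⟩⟩
      exact (LinearEquiv.ofInjective f hf).trans
        (LinearEquiv.ofEq _ _ (Submodule.ker_mkQ _).symm)
  · rintro ⟨hsyz, hofsyz⟩
    constructor
    · -- X is closed under cosyzygies
      rintro M hM N ⟨Q, f, happrox, ⟨eN⟩⟩
      obtain ⟨N', hN', P, p, hP, hpsurj, ⟨e⟩⟩ := hofsyz M hM
      set i : (M : Type) →ₗ[R] P := (LinearMap.ker p).subtype.comp e.toLinearMap with hidef
      have hi : Function.Injective i := (Submodule.injective_subtype _).comp e.injective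
      have hrangei : LinearMap.range i = LinearMap.ker p := by
        rw [hidef, LinearMap.range_comp, LinearEquiv.range, Submodule.map_top,
          Submodule.range_subtype]
      obtain ⟨h, hh⟩ := happrox.2 P hP i
      have hker : LinearMap.range f ≤ LinearMap.ker (p.comp h) := by
        rintro _ ⟨m, rfl⟩
        have hfm : h (f m) = i m := LinearMap.congr_fun hh m
        have him : i m ∈ LinearMap.ker p := hrangei ▸ LinearMap.mem_range_self i m
        simp only [LinearMap.mem_ker, LinearMap.comp_apply, hfm]
        exact him
      set c : (↥Q ⧸ LinearMap.range f) →ₗ[R] N' :=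
        (LinearMap.range f).liftQ (p.comp h) hker with hcdef
      have hcq : ∀ q : ↥Q, c ((LinearMap.range f).mkQ q) = p (h q) := fun q => rfl
      set α : (Q : Type) →ₗ[R] ↥P × (↥Q ⧸ LinearMap.range f) :=
        h.prod (LinearMap.range f).mkQ with hαdef
      set β : (↥P × (↥Q ⧸ LinearMap.range f)) →ₗ[R] N' :=
        p.coprod (-c) with hβdef
      have hses : SES (L := Q) (M := ModuleCat.of R (↥P × (↥Q ⧸ LinearMap.range f)))
          (N := N') R α β := by
        refine ⟨?_, ?_, ?_⟩
        · -- α injective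
          intro x y hxy
          have h1 : h x = h y := congrArg Prod.fst hxy
          have h2 : (LinearMap.range f).mkQ x = (LinearMap.range f).mkQ y :=
            congrArg Prod.snd hxy
          have hxyr : x - y ∈ LinearMap.range f := by
            rw [← Submodule.ker_mkQ (LinearMap.range f), LinearMap.mem_ker, map_sub, h2, sub_self]
          obtain ⟨m, hm⟩ := hxyr
          have him : i m = 0 := by
            rw [← LinearMap.congr_fun hh m, LinearMap.comp_apply, hm, map_sub, h1, sub_self]
          have hm0 : m = 0 := hi (by simpa using him)
          have : x - y = 0 := by rw [← hm, hm0, map_zero]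
          exact sub_eq_zero.mp this
        · -- β surjective
          intro y
          obtain ⟨x, hx⟩ := hpsurj y
          refine ⟨(x, 0), ?_⟩
          show p x + -(c 0) = y
          rw [map_zero, neg_zero, add_zero]
          exact hx
        · -- ker β = range α
          apply le_antisymm
          · rintro ⟨x, z⟩ hz
            obtain ⟨q, rfl⟩ := Submodule.mkQ_surjective (LinearMap.range f) z
            have hz' : p x + -(c ((LinearMap.range f).mkQ q)) = 0 := hz
            have hxq : p x = p (h q) := by
              rw [hcq q] at hz'
              exact add_neg_eq_zero.mp hz'
            have hmem : x - h q ∈ LinearMap.ker p := by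
              rw [LinearMap.mem_ker, map_sub, sub_eq_zero]
              exact hxq
            rw [← hrangei] at hmem
            obtain ⟨m, hm⟩ := hmem
            refine ⟨q + f m, ?_⟩
            have hfm : h (f m) = i m := LinearMap.congr_fun hh m
            have h1 : h (q + f m) = x := by rw [map_add, hfm, hm]; abel
            have h2 : (LinearMap.range f).mkQ (q + f m) = (LinearMap.range f).mkQ q := by
              have hz0 : (LinearMap.range f).mkQ (f m) = 0 :=
                (Submodule.Quotient.mk_eq_zero _).mpr (LinearMap.mem_range_self f m)
              rw [map_add, hz0, add_zero]
            show (h (q + f m), (LinearMap.range f).mkQ (q + f m))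
                = (x, (LinearMap.range f).mkQ q)
            rw [h1, h2]
          · rintro _ ⟨q, rfl⟩
            show p (h q) + -(c ((LinearMap.range f).mkQ q)) = 0
            rw [hcq q, add_neg_cancel]
      have hmid : X (ModuleCat.of R (↥P × (↥Q ⧸ LinearMap.range f))) :=
        hX.extension Q _ N' α β hses (hX.proj Q happrox.1) hN'
      have hCX : X (ModuleCat.of R (↥Q ⧸ LinearMap.range f)) :=
        hX.summand _ _ P hmid ⟨LinearEquiv.prodComm R _ _⟩
      exact aux_iso_mem hX hCX eN.symm
    · -- every module of X embeds in a f.g. projective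
      intro M hM
      obtain ⟨N', hN', P, p, hP, hpsurj, ⟨e⟩⟩ := hofsyz M hM
      exact ⟨P, (LinearMap.ker p).subtype.comp e.toLinearMap, hP,
        (Submodule.injective_subtype _).comp e.injective⟩
end
end

section
/- Let (R, m, k) be a Noetherian local ring and X a resolving subcategory of finitely generated R-modules. If Ω^t L ∈ X for the residue field L = k and some t ≥ 0, then Ω^t L ∈ X for every R-module L of finite length. -/
open CategoryTheory

noncomputable section

open Paper

namespace Stmt6Aux

variable {R : Type} [CommRing R]

lemma syzygy_congr : ∀ (t : ℕ) {K L L' : ModuleCat.{0} R},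
    ((L : Type) ≃ₗ[R] L') → IsNthSyzygy R t K L → IsNthSyzygy R t K L'
  | 0, _K, _L, _L', e, ⟨f⟩ => ⟨f.trans e⟩
  | (t+1), _K, _L, _L', e, ⟨K', h1, h2⟩ => ⟨K', syzygy_congr t e h1, h2⟩

lemma subsingleton_syzygy (t : ℕ) (Z : ModuleCat.{0} R) [Subsingleton Z] :
    IsNthSyzygy R t Z Z := by
  induction t with
  | zero => exact ⟨LinearEquiv.refl R Z⟩
  | succ t ih =>
    refine ⟨Z, ih, Z, LinearMap.id, ⟨inferInstance, inferInstance⟩,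
      fun z => ⟨z, rfl⟩, ⟨LinearEquiv.ofBijective 0 ⟨fun a b _ => Subsingleton.elim a b,
        fun b => ⟨0, Subsingleton.elim _ b⟩⟩⟩⟩

lemma ses_comp_equiv {A B C KA KC : ModuleCat.{0} R} (f : A →ₗ[R] B) (g : B →ₗ[R] C)
    (h : SES R f g) (eA : (KA : Type) ≃ₗ[R] A) (eC : (C : Type) ≃ₗ[R] KC) :
    SES R (f ∘ₗ (eA : KA →ₗ[R] A)) ((eC : C →ₗ[R] KC) ∘ₗ g) := by
  obtain ⟨hf, hg, hk⟩ := h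
  refine ⟨hf.comp eA.injective, eC.surjective.comp hg, ?_⟩
  ext x
  constructor
  · intro hx
    have hgx : g x = 0 := by
      have h1 : eC (g x) = 0 := hx
      simpa using eC.map_eq_zero_iff.mp h1
    have hx2 : x ∈ LinearMap.range f := by rw [← hk]; exact hgx
    obtain ⟨a, ha⟩ := hx2
    exact ⟨eA.symm a, by simp [ha]⟩
  · rintro ⟨k, rfl⟩
    have h1 : f (eA k) ∈ LinearMap.ker g := by rw [hk]; exact ⟨_, rfl⟩
    have h2 : g (f (eA k)) = 0 := h1
    show eC (g (f (eA k))) = 0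
    rw [h2, map_zero]

lemma horseshoe_one {A B C KA KC : ModuleCat.{0} R} (f : A →ₗ[R] B) (g : B →ₗ[R] C)
    (hfg : SES R f g) (hA : IsSyzygy R KA A) (hC : IsSyzygy R KC C) :
    ∃ (KB : ModuleCat.{0} R) (f' : KA →ₗ[R] KB) (g' : KB →ₗ[R] KC),
      IsSyzygy R KB B ∧ SES R f' g' := by
  obtain ⟨hf, hg, hker⟩ := hfg
  obtain ⟨PA, pA, ⟨hPAfin, hPAproj⟩, hpA, ⟨eA⟩⟩ := hA
  obtain ⟨PC, pC, ⟨hPCfin, hPCproj⟩, hpC, ⟨eC⟩⟩ := hC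
  obtain ⟨σ, hσ⟩ := Module.projective_lifting_property g pC hg
  have hσ' : ∀ q : PC, g (σ q) = pC q := fun q => LinearMap.congr_fun hσ q
  set π : (PA × PC : Type) →ₗ[R] B := LinearMap.coprod (f ∘ₗ pA) σ with hπ
  have hπ_apply : ∀ x : PA × PC, π x = f (pA x.1) + σ x.2 := fun x => rfl
  have hπsurj : Function.Surjective π := by
    intro b
    obtain ⟨q, hq⟩ := hpC (g b)
    have h0 : g (b - σ q) = 0 := by rw [map_sub, hσ' q, hq, sub_self]
    have hmem : b - σ q ∈ LinearMap.range f := by rw [← hker]; exact h0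
    obtain ⟨a, ha⟩ := hmem
    obtain ⟨p, hp⟩ := hpA a
    exact ⟨(p, q), by rw [hπ_apply]; simp [hp, ha]⟩
  have hmem1 : ∀ a : LinearMap.ker pA,
      ((LinearMap.inl R PA PC) ∘ₗ (LinearMap.ker pA).subtype) a ∈ LinearMap.ker π := by
    intro a
    show π (a.1, 0) = 0
    rw [hπ_apply]
    simp [a.2]
  have hmem2 : ∀ x : LinearMap.ker π,
      ((LinearMap.snd R PA PC) ∘ₗ (LinearMap.ker π).subtype) x ∈ LinearMap.ker pC := by
    intro x
    have h1 : f (pA x.1.1) + σ x.1.2 = 0 := x.2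
    have h2 : g (f (pA x.1.1)) = 0 := by
      have hm : f (pA x.1.1) ∈ LinearMap.ker g := by rw [hker]; exact ⟨_, rfl⟩
      exact hm
    show pC x.1.2 = 0
    rw [← hσ' x.1.2]
    have h3 := congrArg g h1
    rw [map_add, map_zero, h2, zero_add] at h3
    exact h3
  set j : (LinearMap.ker pA : Type) →ₗ[R] LinearMap.ker π :=
    LinearMap.codRestrict (LinearMap.ker π)
      ((LinearMap.inl R PA PC) ∘ₗ (LinearMap.ker pA).subtype) hmem1 with hj
  set q' : (LinearMap.ker π : Type) →ₗ[R] LinearMap.ker pC :=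
    LinearMap.codRestrict (LinearMap.ker pC)
      ((LinearMap.snd R PA PC) ∘ₗ (LinearMap.ker π).subtype) hmem2 with hq'
  have hjval : ∀ a : LinearMap.ker pA, ((j a : LinearMap.ker π) : PA × PC) = (a.1, 0) :=
    fun _ => rfl
  have hq'val : ∀ x : LinearMap.ker π, ((q' x : LinearMap.ker pC) : PC) = x.1.2 := fun _ => rfl
  refine ⟨ModuleCat.of R (LinearMap.ker π),
    j ∘ₗ (eA : KA →ₗ[R] LinearMap.ker pA),
    (eC.symm : LinearMap.ker pC →ₗ[R] KC) ∘ₗ q', ?_, ?_, ?_, ?_⟩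
  · exact ⟨ModuleCat.of R (PA × PC : Type), π,
      ⟨(inferInstance : Module.Finite R (PA × PC : Type)),
       (inferInstance : Module.Projective R (PA × PC : Type))⟩, hπsurj,
      ⟨LinearEquiv.refl R _⟩⟩
  · -- injective
    intro a b hab
    apply eA.injective
    have h1 : ((j (eA a) : LinearMap.ker π) : PA × PC) = j (eA b) := congrArg Subtype.val hab
    rw [hjval, hjval] at h1
    exact Subtype.ext (congrArg Prod.fst h1)
  · -- surjective
    intro c
    set y : LinearMap.ker pC := eC c with hy
    have hgy : g (σ y.1) = 0 := by rw [hσ' y.1]; exact y.2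
    have hmem : σ y.1 ∈ LinearMap.range f := by rw [← hker]; exact hgy
    obtain ⟨a, ha⟩ := hmem
    obtain ⟨p, hp⟩ := hpA a
    have hx : ((-p, y.1) : PA × PC) ∈ LinearMap.ker π := by
      show π (-p, y.1) = 0
      rw [hπ_apply]
      simp [hp, ha]
    refine ⟨⟨(-p, y.1), hx⟩, ?_⟩
    show eC.symm (q' ⟨(-p, y.1), hx⟩) = c
    rw [LinearEquiv.symm_apply_eq]
    exact Subtype.ext rfl
  · -- ker = range
    ext x
    constructor
    · intro hx
      have h1 : eC.symm (q' x) = 0 := hx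
      have h2 : x.1.2 = 0 := by
        have h3 := eC.symm.map_eq_zero_iff.mp h1
        have h4 := congrArg Subtype.val h3
        rwa [hq'val] at h4
      have h3 : f (pA x.1.1) = 0 := by
        have h4 : f (pA x.1.1) + σ x.1.2 = 0 := x.2
        rwa [h2, map_zero, add_zero] at h4
      have h5 : pA x.1.1 = 0 := by
        apply hf
        rw [h3, map_zero]
      refine ⟨eA.symm ⟨x.1.1, h5⟩, ?_⟩
      apply Subtype.ext
      show ((j (eA (eA.symm ⟨x.1.1, h5⟩)) : LinearMap.ker π) : PA × PC) = x.1
      rw [eA.apply_symm_apply, hjval]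
      exact Prod.ext rfl h2.symm
    · rintro ⟨a, rfl⟩
      show eC.symm (q' (j (eA a))) = 0
      rw [LinearEquiv.symm_apply_eq, map_zero]
      apply Subtype.ext
      rw [hq'val, hjval]
      rfl

lemma horseshoe : ∀ (t : ℕ) {A B C KA KC : ModuleCat.{0} R} (f : A →ₗ[R] B) (g : B →ₗ[R] C),
    SES R f g → IsNthSyzygy R t KA A → IsNthSyzygy R t KC C →
    ∃ (KB : ModuleCat.{0} R) (f' : KA →ₗ[R] KB) (g' : KB →ₗ[R] KC),
      IsNthSyzygy R t KB B ∧ SES R f' g'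
  | 0, A, B, C, KA, KC, f, g, hfg, ⟨eA⟩, ⟨eC⟩ =>
    ⟨B, f ∘ₗ (eA : KA →ₗ[R] A), (eC.symm : C →ₗ[R] KC) ∘ₗ g, ⟨LinearEquiv.refl R B⟩,
      ses_comp_equiv f g hfg eA eC.symm⟩
  | (t+1), A, B, C, KA, KC, f, g, hfg, ⟨KA', hA1, hA2⟩, ⟨KC', hC1, hC2⟩ => by
    obtain ⟨KB', f₁, g₁, hKB', hses₁⟩ := horseshoe t f g hfg hA1 hC1
    obtain ⟨KB, f', g', hsyz, hses⟩ := horseshoe_one f₁ g₁ hses₁ hA2 hC2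
    exact ⟨KB, f', g', ⟨KB', hKB', hsyz⟩, hses⟩

lemma main_aux [IsLocalRing R] (X : ModuleCat.{0} R → Prop) (hX : Resolving R X) (t : ℕ)
    (hk : ∃ K, X K ∧ IsNthSyzygy R t K (ModuleCat.of R (IsLocalRing.ResidueField R))) :
    ∀ (M : Type) [AddCommGroup M] [Module R M], IsFiniteLength R M →
      ∃ K, X K ∧ IsNthSyzygy R t K (ModuleCat.of R M) := by
  intro M _ _ hM
  induction hM with
  | of_subsingleton =>
    rename_i M _ _ hsub
    exact ⟨ModuleCat.of R M, hX.proj _ ⟨(inferInstance : Module.Finite R M),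
      (inferInstance : Module.Projective R M)⟩,
      @subsingleton_syzygy R _ t (ModuleCat.of R M) hsub⟩
  | @of_simple_quotient M _ _ N _ _ ih =>
    obtain ⟨KA, hKA, hKAsyz⟩ := ih
    obtain ⟨I, hImax, ⟨e⟩⟩ := isSimpleModule_iff_quot_maximal.mp ‹IsSimpleModule R (M ⧸ N)›
    have hI : I = IsLocalRing.maximalIdeal R := IsLocalRing.eq_maximalIdeal hImax
    subst hI
    obtain ⟨K0, hK0, hK0syz⟩ := hk
    have e2 : (IsLocalRing.ResidueField R : Type) ≃ₗ[R] (M ⧸ N) := e.symm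
    have hKC : IsNthSyzygy R t K0 (ModuleCat.of R (M ⧸ N)) := syzygy_congr t e2 hK0syz
    have hses : SES R (show (ModuleCat.of R N : ModuleCat.{0} R) →ₗ[R] ModuleCat.of R M
        from N.subtype) (show (ModuleCat.of R M : ModuleCat.{0} R) →ₗ[R] ModuleCat.of R (M ⧸ N)
        from N.mkQ) := by
      refine ⟨N.injective_subtype, N.mkQ_surjective, ?_⟩
      rw [Submodule.ker_mkQ, Submodule.range_subtype]
    obtain ⟨KB, f', g', hKBsyz, hKBses⟩ := horseshoe t _ _ hses hKAsyz hKC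
    exact ⟨KB, hX.extension KA KB K0 f' g' hKBses hKA hK0, hKBsyz⟩

end Stmt6Aux

/-- if `Ω^t k` belongs to a resolving subcategory `X`, then `Ω^t L ∈ X`
for every module `L` of finite length. -/
theorem stmt6 (R : Type) [CommRing R] [IsNoetherianRing R] [IsLocalRing R]
    (X : ModuleCat.{0} R → Prop) (hX : Resolving R X) (t : ℕ)
    (hk : ∃ K, X K ∧ IsNthSyzygy R t K (ModuleCat.of R (IsLocalRing.ResidueField R)))
    (L : ModuleCat.{0} R) (hL : IsFiniteLength R L) :
    ∃ K, X K ∧ IsNthSyzygy R t K L := by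
  obtain ⟨K, hK, hsyz⟩ := Stmt6Aux.main_aux X hX t hk L hL
  exact ⟨K, hK, Stmt6Aux.syzygy_congr t (LinearEquiv.refl R L) hsyz⟩
end
end

section
/- Let R be a Noetherian local ring and X a resolving subcategory of finitely generated R-modules. Suppose there exist a finitely generated R-module M and an M-regular sequence x₁, …, x_n such that M/(x₁,…,x_n)M belongs to X. Then X has infinite radius. -/
open CategoryTheory

noncomputable section

open Paper

/-!
Reduce to `M ⧸ (x₁,…,xₙ)M ≅ N ⧸ xN` with `x` regular on `N` and `xN ≠ N`. The extensions
`0 → N ⧸ xᵗN → N ⧸ xᵗ⁺¹N → N ⧸ xN → 0` put every `N ⧸ xᵗN` into `X`. On the other hand, if `xᵉ`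
kills the `x`-power torsion of both `R` and the center `C` (such `e` exists by noetherianity), then
`x^((n+1)e)` kills the `x`-power torsion of every module of `[C]_{n+1}`: syzygies embed into
projectives, and the exponents add up along extensions. But `N ⧸ xᵗN` is `x`-power torsion and,
by regularity, not killed by `xᵗ⁻¹`, so `N ⧸ xᵗN ∉ [C]_{n+1}` for large `t`.
-/

open Pointwise

section PowTorsion

variable {R : Type*} [CommRing R]

def PowTorsionExponentLE (x : R) (N : Type*) [AddCommGroup N] [Module R N] (e : ℕ) : Prop :=
  ∀ z : N, (∃ s : ℕ, x ^ s • z = 0) → x ^ e • z = 0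

namespace PowTorsionExponentLE

variable {x : R} {N N' : Type*} [AddCommGroup N] [Module R N] [AddCommGroup N'] [Module R N']
  {e : ℕ}

lemma mono (h : PowTorsionExponentLE x N e) {e' : ℕ} (hee : e ≤ e') :
    PowTorsionExponentLE x N e' := by
  intro z hz
  rw [← Nat.sub_add_cancel hee, pow_add, mul_smul, h z hz, smul_zero]

lemma of_injective (h : PowTorsionExponentLE x N e) (f : N' →ₗ[R] N)
    (hf : Function.Injective f) : PowTorsionExponentLE x N' e := by
  rintro z ⟨s, hs⟩
  apply hf
  rw [map_smul, map_zero]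
  exact h (f z) ⟨s, by rw [← map_smul, hs, map_zero]⟩

lemma of_linearEquiv (h : PowTorsionExponentLE x N e) (f : N' ≃ₗ[R] N) :
    PowTorsionExponentLE x N' e :=
  h.of_injective f.toLinearMap f.injective

lemma pi {ι : Type*} {F : ι → Type*} [∀ i, AddCommGroup (F i)] [∀ i, Module R (F i)]
    (h : ∀ i, PowTorsionExponentLE x (F i) e) : PowTorsionExponentLE x (∀ i, F i) e := by
  rintro z ⟨s, hs⟩
  funext i
  exact h i (z i) ⟨s, congrFun hs i⟩

lemma finsupp {ι : Type*} (h : PowTorsionExponentLE x R e) :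
    PowTorsionExponentLE x (ι →₀ R) e := by
  rintro z ⟨s, hs⟩
  ext i
  exact h (z i) ⟨s, by simpa using DFunLike.congr_fun hs i⟩

lemma of_projective [Module.Projective R N] (h : PowTorsionExponentLE x R e) :
    PowTorsionExponentLE x N e := by
  obtain ⟨s, hs⟩ := Module.projective_def.mp ‹Module.Projective R N›
  exact h.finsupp.of_injective s hs.injective

lemma of_exact {N'' : Type*} [AddCommGroup N''] [Module R N''] {f : N' →ₗ[R] N}
    {g : N →ₗ[R] N''} (hf : Function.Injective f) (hfg : LinearMap.ker g = LinearMap.range f)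
    {a b : ℕ} (h' : PowTorsionExponentLE x N' a) (h'' : PowTorsionExponentLE x N'' b) :
    PowTorsionExponentLE x N (a + b) := by
  rintro z ⟨s, hs⟩
  have hgz : x ^ b • z ∈ LinearMap.ker g := by
    rw [LinearMap.mem_ker, map_smul]
    exact h'' (g z) ⟨s, by rw [← map_smul, hs, map_zero]⟩
  obtain ⟨w, hw⟩ := hfg ▸ hgz
  have hw_tors : x ^ s • w = 0 := hf (by rw [map_smul, hw, smul_comm, hs, smul_zero, map_zero])
  rw [pow_add, mul_smul, ← hw, ← map_smul, h' w ⟨s, hw_tors⟩, map_zero]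

lemma exists_of_isNoetherian [IsNoetherian R N] (x : R) : ∃ e, PowTorsionExponentLE x N e := by
  set f := Module.toModuleEnd R (S := R) N x
  have hker (s : ℕ) : LinearMap.ker (f ^ s) = LinearMap.ker (LinearMap.lsmul R N (x ^ s)) := by
    rw [← map_pow]; rfl
  obtain ⟨e, he⟩ := (LinearMap.eventually_iSup_ker_pow_eq f).exists
  refine ⟨e, fun z ⟨s, hs⟩ => ?_⟩
  have hz : z ∈ ⨆ m, LinearMap.ker (f ^ m) :=
    Submodule.mem_iSup_of_mem s (by rw [hker]; exact hs)
  rw [he, hker] at hz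
  exact hz

end PowTorsionExponentLE

end PowTorsion

section QuotSMulTop

variable {R : Type*} [CommRing R] {N : Type*} [AddCommGroup N] [Module R N]

lemma mem_smul_top_iff_exists_smul_eq {r : R} {m : N} :
    m ∈ r • (⊤ : Submodule R N) ↔ ∃ w, r • w = m := by
  simp only [Submodule.mem_smul_pointwise_iff_exists, Submodule.mem_top, true_and]

lemma smul_top_le_comap_lsmul_mul_smul_top (y z : R) :
    y • (⊤ : Submodule R N) ≤ ((y * z) • ⊤ : Submodule R N).comap (LinearMap.lsmul R N z) := by
  intro m hm
  obtain ⟨w, rfl⟩ := mem_smul_top_iff_exists_smul_eq.mp hm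
  refine mem_smul_top_iff_exists_smul_eq.mpr ⟨w, ?_⟩
  rw [LinearMap.lsmul_apply, smul_smul, mul_comm]

lemma mul_smul_top_le_smul_top_right (y z : R) :
    ((y * z) • ⊤ : Submodule R N) ≤ z • ⊤ := by
  intro m hm
  obtain ⟨w, rfl⟩ := mem_smul_top_iff_exists_smul_eq.mp hm
  exact mem_smul_top_iff_exists_smul_eq.mpr ⟨y • w, by rw [smul_smul, mul_comm]⟩

/-- `0 → N ⧸ yN → N ⧸ yzN → N ⧸ zN → 0`, the first map being multiplication by `z`. -/
lemma exists_exact_quotSMulTop_mul {z : R} (hz : IsSMulRegular N z) (y : R) :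
    ∃ (f : QuotSMulTop y N →ₗ[R] QuotSMulTop (y * z) N) (g : QuotSMulTop (y * z) N →ₗ[R]
      QuotSMulTop z N), Function.Injective f ∧ Function.Surjective g ∧
        LinearMap.ker g = LinearMap.range f := by
  refine ⟨Submodule.mapQ _ _ _ (smul_top_le_comap_lsmul_mul_smul_top y z),
    Submodule.factor (mul_smul_top_le_smul_top_right y z), ?_, Submodule.factor_surjective _, ?_⟩
  · rw [← LinearMap.ker_eq_bot, eq_bot_iff]
    intro q hq
    obtain ⟨m, rfl⟩ := Submodule.Quotient.mk_surjective _ q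
    rw [LinearMap.mem_ker, Submodule.mapQ_apply, Submodule.Quotient.mk_eq_zero,
      mem_smul_top_iff_exists_smul_eq] at hq
    obtain ⟨w, hw⟩ := hq
    rw [Submodule.mem_bot, Submodule.Quotient.mk_eq_zero, mem_smul_top_iff_exists_smul_eq]
    rw [LinearMap.lsmul_apply] at hw
    exact ⟨w, hz (show z • y • w = z • m by rw [← hw, smul_smul, mul_comm])⟩
  · ext q
    obtain ⟨m, rfl⟩ := Submodule.Quotient.mk_surjective _ q
    rw [LinearMap.mem_ker, ← Submodule.mkQ_apply, Submodule.factor_mk, Submodule.mkQ_apply,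
      Submodule.Quotient.mk_eq_zero, mem_smul_top_iff_exists_smul_eq]
    constructor
    · rintro ⟨w, rfl⟩
      exact ⟨Submodule.Quotient.mk w, rfl⟩
    · rintro ⟨q', hq'⟩
      obtain ⟨w, rfl⟩ := Submodule.Quotient.mk_surjective _ q'
      rw [Submodule.mapQ_apply, LinearMap.lsmul_apply, Submodule.mkQ_apply, Submodule.Quotient.eq,
        mem_smul_top_iff_exists_smul_eq] at hq'
      obtain ⟨v, hv⟩ := hq'
      exact ⟨w - y • v, by rw [smul_sub, smul_smul, mul_comm, hv, sub_sub_cancel]⟩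

lemma smul_top_eq_top_of_powTorsionExponentLE {x : R} (hx : IsSMulRegular N x) {e : ℕ}
    (h : PowTorsionExponentLE x (QuotSMulTop (x ^ (e + 1)) N) e) :
    x • (⊤ : Submodule R N) = ⊤ := by
  refine eq_top_iff.mpr fun m _ => ?_
  have hkill : x ^ e • (Submodule.Quotient.mk m : QuotSMulTop (x ^ (e + 1)) N) = 0 := by
    refine h _ ⟨e + 1, ?_⟩
    rw [← Submodule.Quotient.mk_smul, Submodule.Quotient.mk_eq_zero]
    exact mem_smul_top_iff_exists_smul_eq.mpr ⟨m, rfl⟩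
  rw [← Submodule.Quotient.mk_smul, Submodule.Quotient.mk_eq_zero,
    mem_smul_top_iff_exists_smul_eq] at hkill
  obtain ⟨w, hw⟩ := hkill
  refine mem_smul_top_iff_exists_smul_eq.mpr ⟨w, hx.pow e ?_⟩
  change x ^ e • x • w = x ^ e • m
  rw [smul_smul, ← pow_succ, hw]

end QuotSMulTop

namespace PowTorsionExponentLE

variable {R : Type} [CommRing R] {x : R} {e : ℕ}

lemma of_fgProj {P : ModuleCat.{0} R} (hP : FGProj R P) (hR : PowTorsionExponentLE x R e) :
    PowTorsionExponentLE x P e :=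
  have := hP.2
  hR.of_projective

lemma of_isSyzygy {N M : ModuleCat.{0} R} (h : IsSyzygy R N M)
    (hR : PowTorsionExponentLE x R e) : PowTorsionExponentLE x N e := by
  obtain ⟨P, f, hP, -, ⟨eqv⟩⟩ := h
  exact ((of_fgProj hP hR).of_injective (LinearMap.ker f).subtype
    (Submodule.injective_subtype _)).of_linearEquiv eqv

lemma of_isNthSyzygy {i : ℕ} {N M : ModuleCat.{0} R} (h : IsNthSyzygy R i N M)
    (hR : PowTorsionExponentLE x R e) (hM : PowTorsionExponentLE x M e) :
    PowTorsionExponentLE x N e := by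
  cases i with
  | zero => exact hM.of_linearEquiv h.some
  | succ i =>
    obtain ⟨K, -, hsyz⟩ := h
    exact of_isSyzygy hsyz hR

lemma of_bracket {Y : ModuleCat.{0} R → Prop} {M : ModuleCat.{0} R} (h : Bracket R Y M)
    (hR : PowTorsionExponentLE x R e) (hY : ∀ N, Y N → PowTorsionExponentLE x N e) :
    PowTorsionExponentLE x M e := by
  obtain ⟨k, f, N, hf, ⟨eqv⟩⟩ := h
  have hpi : PowTorsionExponentLE x (∀ i, f i) e := pi fun i => by
    rcases hf i with hproj | ⟨M₀, j, hM₀, hsyz⟩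
    · exact of_fgProj hproj hR
    · exact of_isNthSyzygy hsyz hR (hY M₀ hM₀)
  exact hpi.of_injective (eqv.toLinearMap ∘ₗ LinearMap.inl R M N)
    (eqv.injective.comp LinearMap.inl_injective)

lemma of_ball {C M : ModuleCat.{0} R} {n : ℕ} (h : Ball R C (n + 1) M)
    (hR : PowTorsionExponentLE x R e) (hC : PowTorsionExponentLE x C e) :
    PowTorsionExponentLE x M ((n + 1) * e) := by
  have hcenter (B : ModuleCat.{0} R) (hB : Bracket R (fun N => Nonempty (N ≃ₗ[R] C)) B) :
      PowTorsionExponentLE x B e :=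
    of_bracket hB hR fun N ⟨eqv⟩ => hC.of_linearEquiv eqv
  induction n generalizing M with
  | zero => simpa using hcenter M h
  | succ n ih =>
    refine of_bracket h (hR.mono (Nat.le_mul_of_pos_left e (by omega))) ?_
    rintro N ⟨A, B, f, g, hA, hB, hf, -, hfg⟩
    rw [add_mul (n + 1), one_mul]
    exact of_exact hf hfg (ih hA) (hcenter B hB)

end PowTorsionExponentLE

namespace Paper.Resolving

variable {R : Type} [CommRing R] {X : ModuleCat.{0} R → Prop}

lemma of_linearEquiv (hX : Resolving R X) {M N : ModuleCat.{0} R} (hM : X M) (e : M ≃ₗ[R] N) :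
    X N :=
  hX.summand M N (ModuleCat.of R PUnit) hM ⟨e.trans LinearEquiv.prodUnique.symm⟩

lemma quotSMulTop_mul_mem (hX : Resolving R X) {N : ModuleCat.{0} R} {y z : R}
    (hz : IsSMulRegular N z) (hy : X (ModuleCat.of R (QuotSMulTop y N)))
    (hz' : X (ModuleCat.of R (QuotSMulTop z N))) :
    X (ModuleCat.of R (QuotSMulTop (y * z) N)) := by
  obtain ⟨f, g, hf, hg, hfg⟩ := exists_exact_quotSMulTop_mul hz y
  exact hX.extension (ModuleCat.of R (QuotSMulTop y N)) _ (ModuleCat.of R (QuotSMulTop z N)) f g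
    ⟨hf, hg, hfg⟩ hy hz'

lemma quotSMulTop_pow_mem (hX : Resolving R X) {N : ModuleCat.{0} R} {x : R}
    (hx : IsSMulRegular N x) (h : X (ModuleCat.of R (QuotSMulTop x N))) (t : ℕ) :
    X (ModuleCat.of R (QuotSMulTop (x ^ (t + 1)) N)) := by
  induction t with
  | zero => rwa [zero_add, pow_one]
  | succ t ih =>
    rw [pow_succ]
    exact hX.quotSMulTop_mul_mem hx ih h

end Paper.Resolving

open RingTheory.Sequence in
lemma exists_isSMulRegular_quotSMulTop_linearEquiv {R : Type} [CommRing R] (xs : List R)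
    (hne : xs ≠ []) (M : ModuleCat.{0} R) (hreg : IsWeaklyRegular M xs) :
    ∃ (N : ModuleCat.{0} R) (x : R), IsSMulRegular N x ∧
      Nonempty ((M ⧸ (Ideal.ofList xs • ⊤ : Submodule R M)) ≃ₗ[R] QuotSMulTop x N) := by
  induction xs generalizing M with
  | nil => exact absurd rfl hne
  | cons y ys ih =>
    rw [isWeaklyRegular_cons_iff] at hreg
    rcases eq_or_ne ys [] with rfl | hys
    · refine ⟨M, y, hreg.1, ⟨(Submodule.quotOfListConsSMulTopEquivQuotSMulTopInner M y []).trans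
        (Submodule.quotEquivOfEqBot _ (by rw [Ideal.ofList_nil, Submodule.bot_smul]))⟩⟩
    · obtain ⟨N, x, hx, ⟨e⟩⟩ := ih hys (ModuleCat.of R (QuotSMulTop y M)) hreg.2
      exact ⟨N, x, hx, ⟨(Submodule.quotOfListConsSMulTopEquivQuotSMulTopInner M y ys).trans e⟩⟩

theorem stmt11_general (R : Type) [CommRing R] [IsNoetherianRing R]
    (X : ModuleCat.{0} R → Prop) (hX : Resolving R X)
    (M : ModuleCat.{0} R)
    (xs : List R) (hne : xs ≠ [])
    (hreg : RingTheory.Sequence.IsRegular M xs)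
    (hmem : X (ModuleCat.of R (M ⧸ (Ideal.ofList xs • (⊤ : Submodule R M))))) :
    ¬ FiniteRadius R X := by
  rintro ⟨C, n, hC, hball⟩
  obtain ⟨N, x, hx, ⟨eqv⟩⟩ :=
    exists_isSMulRegular_quotSMulTop_linearEquiv xs hne M hreg.toIsWeaklyRegular
  have : Module.Finite R C := hX.fg C hC
  obtain ⟨eR, hR⟩ := PowTorsionExponentLE.exists_of_isNoetherian (N := R) x
  obtain ⟨eC, hCe⟩ := PowTorsionExponentLE.exists_of_isNoetherian (N := C) x
  set e := (n + 1) * max eR eC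
  have hquot_mem : X (ModuleCat.of R (QuotSMulTop (x ^ (e + 1)) N)) :=
    hX.quotSMulTop_pow_mem hx (hX.of_linearEquiv hmem eqv) e
  have hquot_bound : PowTorsionExponentLE x (QuotSMulTop (x ^ (e + 1)) N) e :=
    .of_ball (hball _ hquot_mem) (hR.mono (le_max_left _ _)) (hCe.mono (le_max_right _ _))
  have : Subsingleton (QuotSMulTop x N) := Submodule.Quotient.subsingleton_iff.mpr
    (smul_top_eq_top_of_powTorsionExponentLE hx hquot_bound)
  exact hreg.top_ne_smul (Submodule.Quotient.subsingleton_iff.mp eqv.toEquiv.subsingleton).symm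

/-- if `M/(x₁,…,x_n)M ∈ X` for an `M`-regular sequence `x₁,…,x_n`,
then `X` has infinite radius. -/
theorem stmt11 (R : Type) [CommRing R] [IsNoetherianRing R] [IsLocalRing R]
    (X : ModuleCat.{0} R → Prop) (hX : Resolving R X)
    (M : ModuleCat.{0} R) (hMfg : Module.Finite R M)
    (xs : List R) (hne : xs ≠ [])
    (hreg : RingTheory.Sequence.IsRegular M xs)
    (hmem : X (ModuleCat.of R (M ⧸ (Ideal.ofList xs • (⊤ : Submodule R M))))) :
    ¬ FiniteRadius R X :=
  stmt11_general R X hX M xs hne hreg hmem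
end
end

section
/- Let S be any subset of Spec R. Then the subcategory NF⁻¹(S) = {M finitely generated : NF(M) ⊆ S} is a resolving subcategory of finitely generated R-modules and is closed under the Auslander transpose Tr; in particular it is closed under cosyzygies Ω⁻¹. -/
open CategoryTheory

noncomputable section

open Paper

/-- the subcategory `NF⁻¹(S)` of modules whose nonfree locus is contained in `S` -/
def NFinv (R : Type) [CommRing R] (S : Set (PrimeSpectrum R))
    (M : ModuleCat.{0} R) : Prop :=
  Module.Finite R M ∧ ∀ p : PrimeSpectrum R, p ∉ S → FreeAt R M p

/-!
Localization at a prime is exact and commutes with `Hom` out of finitely presented modules, and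
over a local ring a finitely generated module is free iff it is projective, so every closure
property reduces to a statement about projective modules over an arbitrary ring. Short exact
sequences ending in a projective split, which gives extensions and kernels of epimorphisms. For
the transpose, a presentation `P₁ →d P₀ →π M → 0` with `M` projective admits `v` with
`d v d = d` (lift `1 - σ π` through `d`, where `σ` is a section of `π`); dually `d* v* d* = d*`,
so `coker d*` is a direct summand of `P₁*`. For the cosyzygy, every functional on `M_p` is a
fraction of one on `M`, so a left `add R`-approximation `f : M → P` still extends all functionals
after localizing; when `M_p` is projective this makes `f_p` split injective and `coker f_p` a
direct summand of `P_p`.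
-/

open Module LinearMap

section Projective

variable {A : Type*} [Ring A] {E F L M N : Type*} [AddCommGroup E] [Module A E]
  [AddCommGroup F] [Module A F] [AddCommGroup L] [Module A L] [AddCommGroup M] [Module A M]
  [AddCommGroup N] [Module A N]

theorem Module.Projective.quotient_range_of_comp_comp_eq [Projective A F] (u : E →ₗ[A] F)
    (t : F →ₗ[A] E) (h : u ∘ₗ t ∘ₗ u = u) : Projective A (F ⧸ range u) := by
  have hu : range u ≤ ker (LinearMap.id - u ∘ₗ t) := by
    rintro _ ⟨y, rfl⟩
    simpa [sub_eq_zero] using (congr($h y)).symm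
  refine .of_split ((range u).liftQ _ hu) (range u).mkQ ?_
  ext x
  simp [(Submodule.Quotient.mk_eq_zero _).2 (mem_range_self u (t x))]

theorem Function.Exact.exists_comp_comp_eq [Projective A F] [Projective A M] {d : E →ₗ[A] F}
    {π : F →ₗ[A] M} (hex : Function.Exact d π) (hπ : Function.Surjective π) :
    ∃ v : F →ₗ[A] E, d ∘ₗ v ∘ₗ d = d := by
  obtain ⟨σ, hσ⟩ := Module.projective_lifting_property π LinearMap.id hπ
  set ρ : F →ₗ[A] F := LinearMap.id - σ ∘ₗ π
  have hρ (x : F) : ρ x ∈ range d :=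
    (hex _).1 (by simp [ρ, ← LinearMap.comp_apply π σ, hσ])
  obtain ⟨v, hv⟩ := Module.projective_lifting_property d.rangeRestrict (ρ.codRestrict _ hρ)
    d.surjective_rangeRestrict
  have hdv : d ∘ₗ v = ρ := by
    ext x; simpa using congr(((($hv) x : range d) : F))
  refine ⟨v, ?_⟩
  ext x
  simp [← LinearMap.comp_apply d v, hdv, ρ, hex.apply_apply_eq_zero]

theorem Function.Exact.nonempty_linearEquiv_prod_of_projective [Projective A N] {f : L →ₗ[A] M}
    {g : M →ₗ[A] N} (hex : Function.Exact f g) (hf : Function.Injective f)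
    (hg : Function.Surjective g) : Nonempty (M ≃ₗ[A] L × N) :=
  let ⟨σ, hσ⟩ := Module.projective_lifting_property g LinearMap.id hg
  ⟨(hex.splitSurjectiveEquiv hf ⟨σ, hσ⟩).1⟩

end Projective

section Dual

variable {A X Y P₁ P₀ M : Type*} [CommRing A] [AddCommGroup X] [Module A X] [AddCommGroup Y]
  [Module A Y] [AddCommGroup P₁] [Module A P₁] [AddCommGroup P₀] [Module A P₀] [AddCommGroup M]
  [Module A M]

theorem LinearMap.exists_leftInverse_of_forall_dual_extends [Module.Finite A X] [Projective A X]
    (f : X →ₗ[A] Y) (hf : ∀ φ : Dual A X, ∃ ψ : Dual A Y, ψ ∘ₗ f = φ) :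
    ∃ r : Y →ₗ[A] X, r ∘ₗ f = LinearMap.id := by
  obtain ⟨n, π, ι, -, -, hπι⟩ := Module.Finite.exists_comp_eq_id_of_projective A X
  choose ψ hψ using fun i : Fin n => hf (proj i ∘ₗ ι)
  refine ⟨π ∘ₗ pi ψ, ?_⟩
  have : pi ψ ∘ₗ f = ι := by ext x i; exact congr($(hψ i) x)
  rw [comp_assoc, this, hπι]

theorem Module.Projective.quotient_range_dualMap_of_exact [Module.Finite A P₁] [Projective A P₁]
    [Projective A P₀] [Projective A M] {d : P₁ →ₗ[A] P₀} {π : P₀ →ₗ[A] M}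
    (hex : Function.Exact d π) (hπ : Function.Surjective π) :
    Projective A (Dual A P₁ ⧸ range d.dualMap) := by
  obtain ⟨v, hv⟩ := hex.exists_comp_comp_eq hπ
  refine quotient_range_of_comp_comp_eq d.dualMap v.dualMap ?_
  rw [dualMap_comp_dualMap, dualMap_comp_dualMap, comp_assoc, hv]

end Dual

section Localization

variable {R : Type*} [CommRing R] (S : Submonoid R) {L M N : Type*} [AddCommGroup L] [Module R L]
  [AddCommGroup M] [Module R M] [AddCommGroup N] [Module R N]

theorem LocalizedModule.map_comp (f : L →ₗ[R] M) (g : M →ₗ[R] N) :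
    map S (g ∘ₗ f) = map S g ∘ₗ map S f := by
  ext x
  induction x using LocalizedModule.induction_on
  simp

theorem LocalizedModule.projective_of_retract (i : N →ₗ[R] M) (r : M →ₗ[R] N)
    (h : r ∘ₗ i = LinearMap.id) (hM : Projective (Localization S) (LocalizedModule S M)) :
    Projective (Localization S) (LocalizedModule S N) :=
  .of_split (map S i) (map S r) (by rw [← map_comp, h, map_id])

section Exact

variable {S} {f : L →ₗ[R] M} {g : M →ₗ[R] N} (hex : Function.Exact f g)
  (hf : Function.Injective f) (hg : Function.Surjective g)
  (hN : Projective (Localization S) (LocalizedModule S N))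
include hex hf hg hN

theorem LocalizedModule.projective_of_exact_of_left
    (hL : Projective (Localization S) (LocalizedModule S L)) :
    Projective (Localization S) (LocalizedModule S M) :=
  let ⟨e⟩ := (map_exact S f g hex).nonempty_linearEquiv_prod_of_projective (A := Localization S)
    (map_injective S f hf) (map_surjective S g hg)
  .of_equiv e.symm

theorem LocalizedModule.projective_of_exact_of_middle
    (hM : Projective (Localization S) (LocalizedModule S M)) :
    Projective (Localization S) (LocalizedModule S L) :=
  let ⟨e⟩ := (map_exact S f g hex).nonempty_linearEquiv_prod_of_projective (A := Localization S)
    (map_injective S f hf) (map_surjective S g hg)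
  .of_split (e.symm.toLinearMap ∘ₗ inl _ _ _) (fst _ _ _ ∘ₗ e.toLinearMap) (by ext; simp)

end Exact

abbrev Module.Dual.localized (M : Type*) [AddCommGroup M] [Module R M] :
    Dual R M →ₗ[R] Dual (Localization S) (LocalizedModule S M) :=
  IsLocalizedModule.mapExtendScalars S (LocalizedModule.mkLinearMap S M)
    (Algebra.linearMap R (Localization S)) (Localization S)

theorem Module.Dual.localized_comp (f : N →ₗ[R] M) (φ : Dual R M) :
    localized S N (φ ∘ₗ f) = localized S M φ ∘ₗ LocalizedModule.map S f := by
  ext x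
  induction x using LocalizedModule.induction_on
  simp only [LinearMap.comp_apply, LocalizedModule.map_mk]
  simp [IsLocalizedModule.mk_eq_mk']

end Localization

section Cokernel

variable {R : Type*} [CommRing R] (S : Submonoid R) {M N M' N' : Type*} [AddCommGroup M]
  [Module R M] [AddCommGroup N] [Module R N] [AddCommGroup M'] [Module R M']
  [Module (Localization S) M'] [IsScalarTower R (Localization S) M'] [AddCommGroup N']
  [Module R N'] [Module (Localization S) N'] [IsScalarTower R (Localization S) N']

def IsLocalizedModule.quotientRangeEquiv (fM : M →ₗ[R] M') (fN : N →ₗ[R] N')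
    [IsLocalizedModule S fM] [IsLocalizedModule S fN] (g : M →ₗ[R] N)
    (g' : M' →ₗ[Localization S] N') (hg : ∀ m, g' (fM m) = fN (g m)) :
    LocalizedModule S (N ⧸ range g) ≃ₗ[Localization S] N' ⧸ range g' :=
  have hrange : range g' = (range g).localized' (Localization S) S fN := by
    rw [localized'_range_eq_range_localizedMap (Localization S) S fM fN g]
    congr 1
    apply restrictScalars_injective R
    apply IsLocalizedModule.linearMap_ext S fM fN
    ext m
    simp [hg]
  (IsLocalizedModule.linearEquiv S (LocalizedModule.mkLinearMap S _)
      ((range g).toLocalizedQuotient' (Localization S) S fN)).extendScalarsOfIsLocalization S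
      (Localization S) ≪≫ₗ Submodule.quotEquivOfEq _ _ hrange.symm

end Cokernel

section LocalizedDual

variable {R : Type*} [CommRing R] (S : Submonoid R) {M P P₁ P₀ : Type*} [AddCommGroup M]
  [Module R M] [AddCommGroup P] [Module R P] [AddCommGroup P₁] [Module R P₁]
  [AddCommGroup P₀] [Module R P₀]

theorem LocalizedModule.projective_quotient_range_dualMap [Module.Finite R P₁] [Projective R P₁]
    [Module.Finite R P₀] [Projective R P₀] {d : P₁ →ₗ[R] P₀} {π : P₀ →ₗ[R] M}
    (hex : Function.Exact d π) (hπ : Function.Surjective π)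
    (hM : Projective (Localization S) (LocalizedModule S M)) :
    Projective (Localization S) (LocalizedModule S (Dual R P₁ ⧸ range d.dualMap)) :=
  have : Module.FinitePresentation R P₀ := Module.finitePresentation_of_projective R P₀
  have : Module.FinitePresentation R P₁ := Module.finitePresentation_of_projective R P₁
  have := Projective.quotient_range_dualMap_of_exact (d := map S d) (π := map S π)
    (map_exact S d π hex) (map_surjective S π hπ)
  .of_equiv (IsLocalizedModule.quotientRangeEquiv S (Dual.localized S P₀) (Dual.localized S P₁)
    d.dualMap (map S d).dualMap (fun φ => (Dual.localized_comp S d φ).symm)).symm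

theorem LocalizedModule.forall_dual_extends [Module.FinitePresentation R M] {f : M →ₗ[R] P}
    (hf : ∀ φ : Dual R M, ∃ ψ : Dual R P, ψ ∘ₗ f = φ)
    (φ : Dual (Localization S) (LocalizedModule S M)) :
    ∃ ψ : Dual (Localization S) (LocalizedModule S P), ψ ∘ₗ map S f = φ := by
  obtain ⟨⟨φ₀, s⟩, hφ₀⟩ := IsLocalizedModule.surj S (Dual.localized S M) φ
  obtain ⟨ψ₀, rfl⟩ := hf φ₀
  refine ⟨IsLocalization.mk' (Localization S) (1 : R) s • Dual.localized S P ψ₀, ?_⟩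
  rw [smul_comp, ← Dual.localized_comp, ← hφ₀, Submonoid.smul_def,
    ← algebraMap_smul (Localization S) (s : R) φ, smul_smul, IsLocalization.mk'_spec, map_one,
    one_smul]

theorem LocalizedModule.projective_quotient_range_of_forall_dual_extends
    [Module.FinitePresentation R M] [Module.Finite R P] [Projective R P] {f : M →ₗ[R] P}
    (hf : ∀ φ : Dual R M, ∃ ψ : Dual R P, ψ ∘ₗ f = φ)
    (hM : Projective (Localization S) (LocalizedModule S M)) :
    Projective (Localization S) (LocalizedModule S (P ⧸ range f)) := by
  obtain ⟨r, hr⟩ :=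
    (map S f).exists_leftInverse_of_forall_dual_extends (forall_dual_extends S hf)
  have := Projective.quotient_range_of_comp_comp_eq (map S f) r (by rw [hr, comp_id])
  exact .of_equiv (IsLocalizedModule.quotientRangeEquiv S (mkLinearMap S M) (mkLinearMap S P) f
    (map S f) (fun m => map_mk S f m 1)).symm

end LocalizedDual

section NFinv

variable {R : Type} [CommRing R] {S : Set (PrimeSpectrum R)}

theorem freeAt_iff_projective (M : ModuleCat.{0} R) [Module.Finite R M] (p : PrimeSpectrum R) :
    FreeAt R M p ↔
      Projective (Localization.AtPrime p.asIdeal) (LocalizedModule p.asIdeal.primeCompl M) :=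
  ⟨fun h => @Projective.of_free _ _ _ _ _ h, fun _ =>
    have : Flat (Localization.AtPrime p.asIdeal) (LocalizedModule p.asIdeal.primeCompl M) :=
      Flat.of_projective
    free_of_flat_of_isLocalRing⟩

theorem nfinv_iff {M : ModuleCat.{0} R} :
    NFinv R S M ↔ Module.Finite R M ∧ ∀ p ∉ S,
      Projective (Localization.AtPrime p.asIdeal) (LocalizedModule p.asIdeal.primeCompl M) :=
  and_congr_right fun _ => forall₂_congr fun p _ => freeAt_iff_projective M p

theorem NFinv.of_fgProj {M : ModuleCat.{0} R} (hM : FGProj R M) : NFinv R S M :=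
  have := hM.1; have := hM.2; nfinv_iff.2 ⟨hM.1, fun _ _ => inferInstance⟩

theorem NFinv.of_linearEquiv_prod {M N N' : ModuleCat.{0} R} (hM : NFinv R S M)
    (e : M ≃ₗ[R] N × N') : NFinv R S N := by
  obtain ⟨hfin, hloc⟩ := nfinv_iff.1 hM
  let i : N →ₗ[R] M := e.symm.toLinearMap ∘ₗ inl R N N'
  let r : M →ₗ[R] N := fst R N N' ∘ₗ e.toLinearMap
  have hri : r ∘ₗ i = LinearMap.id := by ext; simp [i, r]
  exact nfinv_iff.2 ⟨.of_surjective r fun x => ⟨i x, LinearMap.congr_fun hri x⟩, fun p hp =>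
    LocalizedModule.projective_of_retract _ i r hri (hloc p hp)⟩

theorem NFinv.of_SES_of_left {L M N : ModuleCat.{0} R} {f : L →ₗ[R] M} {g : M →ₗ[R] N}
    (h : SES R f g) (hL : NFinv R S L) (hN : NFinv R S N) : NFinv R S M := by
  obtain ⟨hf, hg, hker⟩ := h
  have hex : Function.Exact f g := exact_iff.2 hker
  obtain ⟨_, hLloc⟩ := nfinv_iff.1 hL
  obtain ⟨_, hNloc⟩ := nfinv_iff.1 hN
  exact nfinv_iff.2 ⟨.of_exact hex hg, fun p hp =>
    LocalizedModule.projective_of_exact_of_left hex hf hg (hNloc p hp) (hLloc p hp)⟩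

theorem NFinv.of_SES_of_middle [IsNoetherianRing R] {L M N : ModuleCat.{0} R} {f : L →ₗ[R] M}
    {g : M →ₗ[R] N} (h : SES R f g) (hM : NFinv R S M) (hN : NFinv R S N) : NFinv R S L := by
  obtain ⟨hf, hg, hker⟩ := h
  have hex : Function.Exact f g := exact_iff.2 hker
  obtain ⟨_, hMloc⟩ := nfinv_iff.1 hM
  obtain ⟨_, hNloc⟩ := nfinv_iff.1 hN
  exact nfinv_iff.2 ⟨.of_injective f hf, fun p hp =>
    LocalizedModule.projective_of_exact_of_middle hex hf hg (hNloc p hp) (hMloc p hp)⟩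

theorem NFinv.resolving [IsNoetherianRing R] : Resolving R (NFinv R S) where
  fg _ hM := hM.1
  proj _ hM := .of_fgProj hM
  summand _ _ _ hM e := hM.of_linearEquiv_prod e.some
  extension _ _ _ _ _ h hL hN := .of_SES_of_left h hL hN
  ker_epi _ _ _ _ _ h hM hN := .of_SES_of_middle h hM hN

theorem NFinv.of_linearEquiv {T : ModuleCat.{0} R} {Q : Type} [AddCommGroup Q] [Module R Q]
    [Module.Finite R Q] (e : T ≃ₗ[R] Q) (hQ : ∀ p ∉ S,
      Projective (Localization.AtPrime p.asIdeal) (LocalizedModule p.asIdeal.primeCompl Q)) :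
    NFinv R S T :=
  nfinv_iff.2 ⟨.equiv e.symm, fun p hp => (hQ p hp).of_equiv
    (IsLocalizedModule.mapEquiv p.asIdeal.primeCompl (LocalizedModule.mkLinearMap _ Q)
      (LocalizedModule.mkLinearMap _ T) _ e.symm)⟩

theorem NFinv.of_isTranspose {M T : ModuleCat.{0} R} (hM : NFinv R S M)
    (hT : IsTranspose R T M) : NFinv R S T := by
  obtain ⟨P₁, P₀, d, π, ⟨_, _⟩, ⟨_, _⟩, hπ, hker, ⟨e⟩⟩ := hT
  exact .of_linearEquiv e fun p hp => LocalizedModule.projective_quotient_range_dualMap _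
    (exact_iff.2 hker) hπ ((nfinv_iff.1 hM).2 p hp)

theorem NFinv.of_isCosyzygy [IsNoetherianRing R] {M N : ModuleCat.{0} R} (hM : NFinv R S M)
    (hN : IsCosyzygy R N M) : NFinv R S N := by
  obtain ⟨P, f, ⟨⟨_, _⟩, happrox⟩, ⟨e⟩⟩ := hN
  have := hM.1
  have := Module.finitePresentation_of_finite R M
  have hf (φ : Dual R M) : ∃ ψ : Dual R P, ψ ∘ₗ f = φ :=
    happrox (ModuleCat.of R R) ⟨.self R, inferInstance⟩ φ
  exact .of_linearEquiv e fun p hp =>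
    LocalizedModule.projective_quotient_range_of_forall_dual_extends _ hf ((nfinv_iff.1 hM).2 p hp)

end NFinv

/-- `NF⁻¹(S)` is a resolving subcategory closed under transposes and
cosyzygies. -/
theorem stmt14 (R : Type) [CommRing R] [IsNoetherianRing R]
    (S : Set (PrimeSpectrum R)) :
    Resolving R (NFinv R S) ∧
    (∀ M, NFinv R S M → ∀ T, IsTranspose R T M → NFinv R S T) ∧
    (∀ M, NFinv R S M → ∀ N, IsCosyzygy R N M → NFinv R S N) :=
  ⟨NFinv.resolving, fun _ hM _ hT => hM.of_isTranspose hT, fun _ hM _ hN => hM.of_isCosyzygy hN⟩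
end
end
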